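/- arXiv:2302.12950 — 8 statements merged into one kernel-verified Lean document; each statement's English description precedes it below -/
import Mathlib

section
/- The group of plane isometries generated by rotation by 2π/n about -1 and rotation by 2π/n about 1 is infinite whenever n ≥ 5 and n ≠ 6. -/
open Complex Real

/-- Rotation of the complex plane about `c` by angle `θ`. -/
noncomputable def rot (c : ℂ) (θ : ℝ) : ℂ → ℂ :=
  fun z => c + Complex.exp (θ * Complex.I) * (z - c)

/-- The group of plane isometries generated by rotation by `2π/n` about `-1` and rotation by
`2π/n` about `1` is infinite whenever `n ≥ 5` and `n ≠ 6`.  (The two rotations are given as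
bijections of `ℂ`, and the group in question is the subgroup they generate.) -/
theorem stmt2 (n : ℕ) (hn : 5 ≤ n) (hn6 : n ≠ 6) (a b : Equiv.Perm ℂ)
    (ha : ∀ z : ℂ, a z = rot (-1) (2 * Real.pi / n) z)
    (hb : ∀ z : ℂ, b z = rot 1 (2 * Real.pi / n) z) :
    Infinite (Subgroup.closure {a, b} : Subgroup (Equiv.Perm ℂ)) := by
  set θ : ℝ := 2 * Real.pi / n with hθ
  set e : ℂ := Complex.exp (θ * Complex.I) with he
  set t : ℂ := 2 - 2 * e with ht
  -- t ≠ 0 since Im e = sin θ > 0 (0 < θ < π because n ≥ 5)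
  have hnpos : (0:ℝ) < n := by positivity
  have hθpos : 0 < θ := by
    rw [hθ]; positivity
  have hθlt : θ < Real.pi := by
    rw [hθ, div_lt_iff₀ hnpos]
    have h5 : (5:ℝ) ≤ n := by exact_mod_cast hn
    nlinarith [Real.pi_pos]
  have hsin : 0 < Real.sin θ := Real.sin_pos_of_pos_of_lt_pi hθpos hθlt
  have hIm : e.im = Real.sin θ := by
    rw [he]
    simp [Complex.exp_ofReal_mul_I_im]
  have htne : t ≠ 0 := by
    intro h
    have : e = 1 := by
      rw [ht] at h
      have : (2:ℂ) * e = 2 := by linear_combination -h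
      field_simp at this
      exact this
    rw [this] at hIm
    simp at hIm
    linarith
  -- the translation c = b * a⁻¹
  set c : Equiv.Perm ℂ := b * a⁻¹ with hc
  have hctrans : ∀ z : ℂ, c z = z + t := by
    intro z
    have hw : a (a⁻¹ z) = z := Equiv.apply_symm_apply a z
    rw [ha] at hw
    unfold rot at hw
    have hw' : e * (a⁻¹ z - (-1)) = z + 1 := by
      rw [← he] at hw; linear_combination hw
    have : c z = b (a⁻¹ z) := rfl
    rw [this, hb]
    unfold rot
    rw [← he]
    have : e * (a⁻¹ z - 1) = e * (a⁻¹ z - (-1)) - 2 * e := by ring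
    rw [this, hw', ht]
    ring
  have hH : c ∈ Subgroup.closure ({a, b} : Set (Equiv.Perm ℂ)) := by
    have haH : a ∈ Subgroup.closure ({a, b} : Set (Equiv.Perm ℂ)) :=
      Subgroup.subset_closure (by simp)
    have hbH : b ∈ Subgroup.closure ({a, b} : Set (Equiv.Perm ℂ)) :=
      Subgroup.subset_closure (by simp)
    exact mul_mem hbH (inv_mem haH)
  have hpow : ∀ k : ℕ, (c ^ k) 0 = k * t := by
    intro k
    induction k with
    | zero => simp
    | succ k ih =>
      rw [pow_succ']
      have : (c * c ^ k) 0 = c ((c ^ k) 0) := rfl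
      rw [this, ih, hctrans]
      push_cast
      ring
  have hinj : Function.Injective
      (fun k : ℕ => (⟨c ^ k, pow_mem hH k⟩ : Subgroup.closure ({a, b} : Set (Equiv.Perm ℂ)))) := by
    intro k m h
    simp only [Subtype.mk.injEq] at h
    have : (c ^ k) 0 = (c ^ m) 0 := by rw [h]
    rw [hpow, hpow] at this
    have : (k : ℂ) = m := mul_right_cancel₀ htne this
    exact_mod_cast this
  exact Infinite.of_injective _ hinj
end

section
/- The subgroup of (ℂ, +) generated by the vectors 2(1 - ζ^k) for k = 0,…,4, where ζ = e^{2πi/5}, is dense in ℂ (in particular it is not discrete). -/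
open Complex Real

namespace Stmt4Aux

noncomputable def ζ : ℂ := Complex.exp ((2 * Real.pi / 5 : ℝ) * Complex.I)

lemma zeta_re : ζ.re = Real.cos (2 * Real.pi / 5) := by
  rw [ζ]; exact Complex.exp_ofReal_mul_I_re _

lemma zeta_im : ζ.im = Real.sin (2 * Real.pi / 5) := by
  rw [ζ]; exact Complex.exp_ofReal_mul_I_im _

lemma angle_pos : 0 < 2 * Real.pi / 5 := by positivity

lemma angle_lt : 2 * Real.pi / 5 < Real.pi := by linarith [Real.pi_pos]

lemma sin_pos : 0 < Real.sin (2 * Real.pi / 5) :=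
  Real.sin_pos_of_pos_of_lt_pi angle_pos angle_lt

lemma zeta_ne_one : ζ ≠ 1 := by
  intro h
  have := zeta_im
  rw [h] at this
  simp at this
  exact sin_pos.ne' this.symm

lemma zeta_pow_five : ζ ^ 5 = 1 := by
  rw [ζ, ← Complex.exp_nat_mul]
  rw [show ((5 : ℕ) : ℂ) * (((2 * Real.pi / 5 : ℝ) : ℂ) * Complex.I)
      = 2 * (Real.pi : ℂ) * Complex.I by push_cast; ring]
  exact Complex.exp_two_pi_mul_I

lemma zeta_pow_four : ζ ^ 4 = (starRingEnd ℂ) ζ := by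
  have h0 : ζ ≠ 0 := by rw [ζ]; exact Complex.exp_ne_zero _
  have habs : ζ * (starRingEnd ℂ) ζ = 1 := by
    rw [Complex.mul_conj]
    norm_cast
    rw [ζ, Complex.normSq_eq_norm_sq, Complex.norm_exp_ofReal_mul_I]
    norm_num
  have h : ζ * ζ ^ 4 = 1 := by rw [← pow_succ']; exact zeta_pow_five
  exact mul_left_cancel₀ h0 (h.trans habs.symm)

lemma cos_val : Real.cos (2 * Real.pi / 5) = (Real.sqrt 5 - 1) / 4 := by
  have h5 : Real.sqrt 5 ^ 2 = 5 := Real.sq_sqrt (by norm_num)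
  rw [show 2 * Real.pi / 5 = 2 * (Real.pi / 5) by ring, Real.cos_two_mul,
    Real.cos_pi_div_five]
  linear_combination (1 / 8 : ℝ) * h5

def Gset : Set ℂ :=
  {w : ℂ | ∃ k : ℕ, k < 5 ∧
    w = 2 * (1 - Complex.exp ((2 * Real.pi / 5 : ℝ) * Complex.I) ^ k)}

noncomputable def G : AddSubgroup ℂ := AddSubgroup.closure Gset

lemma gen_mem {k : ℕ} (hk : k < 5) : 2 * (1 - ζ ^ k) ∈ G :=
  AddSubgroup.subset_closure ⟨k, hk, rfl⟩

lemma sum_zeta : ∑ k ∈ Finset.range 5, ζ ^ k = 0 := by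
  rw [geom_sum_eq zeta_ne_one, zeta_pow_five]
  simp

lemma ten_mem : (10 : ℂ) ∈ G := by
  have h : (10 : ℂ) = ∑ k ∈ Finset.range 5, 2 * (1 - ζ ^ k) := by
    have h1 : ∑ k ∈ Finset.range 5, 2 * (1 - ζ ^ k)
        = (∑ _k ∈ Finset.range 5, (2 : ℂ)) - 2 * ∑ k ∈ Finset.range 5, ζ ^ k := by
      rw [Finset.mul_sum, ← Finset.sum_sub_distrib]
      exact Finset.sum_congr rfl fun k _ => by ring
    rw [h1, sum_zeta]
    simp
    norm_num
  rw [h]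
  exact AddSubgroup.sum_mem _ fun k hk => gen_mem (Finset.mem_range.mp hk)

lemma real_mem : ((5 - Real.sqrt 5 : ℝ) : ℂ) ∈ G := by
  have h := G.add_mem (gen_mem (k := 1) (by norm_num)) (gen_mem (k := 4) (by norm_num))
  have he : 2 * (1 - ζ ^ 1) + 2 * (1 - ζ ^ 4) = ((5 - Real.sqrt 5 : ℝ) : ℂ) := by
    rw [zeta_pow_four, pow_one]
    have : ζ + (starRingEnd ℂ) ζ = ((2 * ζ.re : ℝ) : ℂ) := Complex.add_conj ζ
    have h2 : 2 * (1 - ζ) + 2 * (1 - (starRingEnd ℂ) ζ)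
        = 4 - 2 * (ζ + (starRingEnd ℂ) ζ) := by ring
    rw [h2, this, zeta_re, cos_val]
    push_cast
    ring
  rwa [he] at h

lemma mul_zeta_mem {x : ℂ} (hx : x ∈ G) : ζ * x ∈ G := by
  induction hx using AddSubgroup.closure_induction with
  | mem w hw =>
    obtain ⟨k, hk, rfl⟩ := hw
    have hgen : ∀ m : ℕ, m < 5 →
        2 * (1 - Complex.exp ((2 * Real.pi / 5 : ℝ) * Complex.I) ^ m) ∈ G :=
      fun m hm => gen_mem hm
    have hz : Complex.exp ((2 * Real.pi / 5 : ℝ) * Complex.I) = ζ := rfl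
    rw [hz]
    interval_cases k
    · simp
    · have : ζ * (2 * (1 - ζ ^ 1)) = 2 * (1 - ζ ^ 2) - 2 * (1 - ζ ^ 1) := by ring
      rw [this]; exact G.sub_mem (gen_mem (by norm_num)) (gen_mem (by norm_num))
    · have : ζ * (2 * (1 - ζ ^ 2)) = 2 * (1 - ζ ^ 3) - 2 * (1 - ζ ^ 1) := by ring
      rw [this]; exact G.sub_mem (gen_mem (by norm_num)) (gen_mem (by norm_num))
    · have : ζ * (2 * (1 - ζ ^ 3)) = 2 * (1 - ζ ^ 4) - 2 * (1 - ζ ^ 1) := by ring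
      rw [this]; exact G.sub_mem (gen_mem (by norm_num)) (gen_mem (by norm_num))
    · have : ζ * (2 * (1 - ζ ^ 4)) = 2 * (1 - ζ ^ 5) - 2 * (1 - ζ ^ 1) := by ring
      rw [this, zeta_pow_five]
      simpa using G.neg_mem (gen_mem (k := 1) (by norm_num))
  | zero => simpa using G.zero_mem
  | add x y hx hy ihx ihy =>
    have : ζ * (x + y) = ζ * x + ζ * y := by ring
    rw [this]; exact G.add_mem ihx ihy
  | neg x hx ih =>
    have : ζ * (-x) = -(ζ * x) := by ring
    rw [this]; exact G.neg_mem ih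

noncomputable def A : AddSubgroup ℝ := AddSubgroup.closure {10, 5 - Real.sqrt 5}

lemma irr5 : Irrational (Real.sqrt 5) := by
  have := (by norm_num : Nat.Prime 5).irrational_sqrt
  simpa using this

lemma denseA : Dense (A : Set ℝ) := by
  rcases AddSubgroup.dense_or_cyclic A with h | ⟨a, ha⟩
  · exact h
  · exfalso
    have h10 : (10 : ℝ) ∈ A := AddSubgroup.subset_closure (by simp)
    have hs : (5 - Real.sqrt 5 : ℝ) ∈ A := AddSubgroup.subset_closure (by simp)
    rw [ha, AddSubgroup.mem_closure_singleton] at h10 hs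
    obtain ⟨m, hm⟩ := h10
    obtain ⟨n, hn⟩ := hs
    rw [zsmul_eq_mul] at hm hn
    have hm0 : m ≠ 0 := by
      rintro rfl
      norm_num at hm
    have key : (m : ℝ) * Real.sqrt 5 = 5 * m - 10 * n := by
      linear_combination (m : ℝ) * hn - (n : ℝ) * hm
    have hmr : (m : ℝ) ≠ 0 := Int.cast_ne_zero.mpr hm0
    apply irr5
    refine ⟨(5 * m - 10 * n : ℚ) / (m : ℚ), ?_⟩
    push_cast
    field_simp
    linarith [key]

lemma memA_cast {x : ℝ} (hx : x ∈ A) : ((x : ℝ) : ℂ) ∈ G := by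
  induction hx using AddSubgroup.closure_induction with
  | mem w hw =>
    rcases hw with h | h
    · subst h; exact_mod_cast ten_mem
    · subst h; exact real_mem
  | zero => simpa using G.zero_mem
  | add x y hx hy ihx ihy => push_cast; exact G.add_mem ihx ihy
  | neg x hx ih => push_cast; exact G.neg_mem ih

lemma real_in_closure (r : ℝ) : ((r : ℝ) : ℂ) ∈ closure (G : Set ℂ) :=
  map_mem_closure Complex.continuous_ofReal (denseA r) fun _ hx => memA_cast hx

lemma zeta_mul_closure {c : ℂ} (hc : c ∈ closure (G : Set ℂ)) :
    ζ * c ∈ closure (G : Set ℂ) :=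
  map_mem_closure (continuous_mul_left ζ) hc fun _ hx => mul_zeta_mem hx

lemma dense_G : Dense (G : Set ℂ) := by
  intro z
  set s : ℝ := z.im / Real.sin (2 * Real.pi / 5) with hs
  set r : ℝ := z.re - s * Real.cos (2 * Real.pi / 5) with hr
  have hz : z = (r : ℂ) + ζ * (s : ℂ) := by
    apply Complex.ext
    · simp only [Complex.add_re, Complex.mul_re, Complex.ofReal_re, Complex.ofReal_im,
        zeta_re, zeta_im, mul_zero, sub_zero]
      rw [hr]; ring
    · simp only [Complex.add_im, Complex.mul_im, Complex.ofReal_re, Complex.ofReal_im,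
        zeta_re, zeta_im, mul_zero, zero_add]
      rw [hs]
      field_simp
      rw [eq_div_iff sin_pos.ne']
  rw [hz]
  have h1 : (r : ℂ) ∈ G.topologicalClosure := real_in_closure r
  have h2 : ζ * (s : ℂ) ∈ G.topologicalClosure :=
    zeta_mul_closure (real_in_closure s)
  exact add_mem h1 h2

end Stmt4Aux

/-- The subgroup of `(ℂ, +)` generated by the vectors `2(1 - ζ^k)`, `k = 0,…,4`, where
`ζ = e^{2πi/5}`, is dense in `ℂ`. -/
theorem stmt4 :
    Dense (AddSubgroup.closure
      {w : ℂ | ∃ k : ℕ, k < 5 ∧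
        w = 2 * (1 - Complex.exp ((2 * Real.pi / 5 : ℝ) * Complex.I) ^ k)} : Set ℂ) :=
  Stmt4Aux.dense_G
end

section
/- For n ≥ 5 with n ≠ 6, the subgroup of (ℂ, +) generated by the n vectors 1 - ζ^k (k = 0,…,n-1), where ζ = e^{2πi/n}, is not discrete: it contains nonzero elements of arbitrarily small absolute value. -/
open Complex Real

namespace Stmt5Aux

noncomputable def ζ (n : ℕ) : ℂ := Complex.exp ((2 * Real.pi / n : ℝ) * Complex.I)

def S (n : ℕ) : Set ℂ := {w : ℂ | ∃ k : ℕ, k < n ∧ w = 1 - ζ n ^ k}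

lemma zeta_pow (n : ℕ) (hn : n ≠ 0) : ζ n ^ n = 1 := by
  rw [ζ, ← Complex.exp_nat_mul]
  have h : (n : ℂ) * (((2 * Real.pi / n : ℝ) : ℂ) * Complex.I) = 2 * Real.pi * Complex.I := by
    have : (n : ℂ) ≠ 0 := Nat.cast_ne_zero.mpr hn
    push_cast
    field_simp
  rw [h, Complex.exp_two_pi_mul_I]

lemma mem_all (n : ℕ) (hn : n ≠ 0) (k : ℕ) :
    1 - ζ n ^ k ∈ AddSubgroup.closure (S n) := by
  rw [pow_eq_pow_mod k (zeta_pow n hn)]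
  exact AddSubgroup.subset_closure ⟨k % n, Nat.mod_lt _ (Nat.pos_of_ne_zero hn), rfl⟩

lemma zeta_mul_mem (n : ℕ) (hn : n ≠ 0) {v : ℂ} (hv : v ∈ AddSubgroup.closure (S n)) :
    ζ n * v ∈ AddSubgroup.closure (S n) := by
  induction hv using AddSubgroup.closure_induction with
  | mem w hw =>
    obtain ⟨k, hk, rfl⟩ := hw
    have h : ζ n * (1 - ζ n ^ k) = (1 - ζ n ^ (k + 1)) - (1 - ζ n ^ 1) := by ring
    rw [h]
    exact sub_mem (mem_all n hn _) (mem_all n hn _)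
  | zero => simpa using AddSubgroup.zero_mem _
  | add x y _ _ hx hy => rw [mul_add]; exact add_mem hx hy
  | neg x _ hx => rw [mul_neg]; exact neg_mem hx

lemma zeta_pow_mul_mem (n : ℕ) (hn : n ≠ 0) (j : ℕ) {v : ℂ}
    (hv : v ∈ AddSubgroup.closure (S n)) :
    ζ n ^ j * v ∈ AddSubgroup.closure (S n) := by
  induction j with
  | zero => simpa using hv
  | succ j ih =>
    have h : ζ n ^ (j + 1) * v = ζ n * (ζ n ^ j * v) := by ring
    rw [h]
    exact zeta_mul_mem n hn ih

lemma mul_mem' (n : ℕ) (hn : n ≠ 0) {w v : ℂ}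
    (hw : w ∈ AddSubgroup.closure (S n)) (hv : v ∈ AddSubgroup.closure (S n)) :
    w * v ∈ AddSubgroup.closure (S n) := by
  induction hw using AddSubgroup.closure_induction with
  | mem w hw =>
    obtain ⟨k, hk, rfl⟩ := hw
    have h : (1 - ζ n ^ k) * v = v - ζ n ^ k * v := by ring
    rw [h]
    exact sub_mem hv (zeta_pow_mul_mem n hn k hv)
  | zero => simpa using AddSubgroup.zero_mem _
  | add x y _ _ hx hy => rw [add_mul]; exact add_mem hx hy
  | neg x _ hx => rw [neg_mul]; exact neg_mem hx

lemma pow_mem' (n : ℕ) (hn : n ≠ 0) {u : ℂ} (hu : u ∈ AddSubgroup.closure (S n)) (m : ℕ) :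
    u ^ (m + 1) ∈ AddSubgroup.closure (S n) := by
  induction m with
  | zero => simpa using hu
  | succ m ih =>
    have h : u ^ (m + 1 + 1) = u ^ (m + 1) * u := by ring
    rw [h]
    exact mul_mem' n hn ih hu

lemma zeta_add_inv (n : ℕ) (hn : n ≠ 0) :
    ζ n + ζ n ^ (n - 1) = ((2 * Real.cos (2 * Real.pi / n) : ℝ) : ℂ) := by
  have hpow : ζ n ^ (n - 1) = Complex.exp (-(((2 * Real.pi / n : ℝ) : ℂ) * Complex.I)) := by
    have h1 : ζ n ^ (n - 1) * ζ n = 1 := by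
      have : ζ n ^ (n - 1) * ζ n = ζ n ^ n := by
        rw [← pow_succ]
        congr 1
        omega
      rw [this, zeta_pow n hn]
    rw [Complex.exp_neg]
    field_simp [ζ] at h1 ⊢
    simp only [ζ] at h1 ⊢
    linear_combination h1
  rw [hpow, ζ]
  have := Complex.two_cos (x := ((2 * Real.pi / n : ℝ) : ℂ))
  rw [neg_mul] at this
  rw [← this, ← Complex.ofReal_cos]
  push_cast
  ring

lemma sqrt5_lt : Real.sqrt 5 < 3 := by
  nlinarith [Real.sq_sqrt (by norm_num : (5:ℝ) ≥ 0), Real.sqrt_nonneg 5]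

lemma lt_sqrt5 : 2 < Real.sqrt 5 := by
  nlinarith [Real.sq_sqrt (by norm_num : (5:ℝ) ≥ 0), Real.sqrt_nonneg 5]

lemma cos_val5 : Real.cos (2 * Real.pi / 5) = (Real.sqrt 5 - 1) / 4 := by
  have h : (2 : ℝ) * Real.pi / 5 = 2 * (Real.pi / 5) := by ring
  rw [h, Real.cos_two_mul, Real.cos_pi_div_five]
  have h5 : Real.sqrt 5 ^ 2 = 5 := Real.sq_sqrt (by norm_num)
  nlinarith [h5]


lemma exists_u (n : ℕ) (hn : 5 ≤ n) (hn6 : n ≠ 6) :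
    ∃ u ∈ AddSubgroup.closure (S n), u ≠ 0 ∧ ‖u‖ < 1 := by
  have hn0 : n ≠ 0 := by omega
  rcases eq_or_ne n 5 with h5 | h5
  · subst h5
    have hζ5 : ζ 5 ^ 5 = 1 := zeta_pow 5 (by norm_num)
    have hsum : ζ 5 + ζ 5 ^ 4 = (((Real.sqrt 5 - 1) / 2 : ℝ) : ℂ) := by
      have h := zeta_add_inv 5 (by norm_num)
      norm_num [cos_val5] at h
      rw [h]; push_cast; ring
    have hfac : (1 - ζ 5 ^ 2) - (1 - ζ 5 ^ 4) - ((1 - ζ 5 ^ 1) + (1 - ζ 5 ^ 1))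
        = (1 - ζ 5) * ((((Real.sqrt 5 - 1) / 2 : ℝ) : ℂ) - 1) := by
      linear_combination hζ5 + (1 - ζ 5) * hsum
    have hone : ζ 5 ≠ 1 := by
      intro h
      have him : (ζ 5).im = Real.sin (2 * Real.pi / (5:ℕ)) := by
        rw [ζ]; exact Complex.exp_ofReal_mul_I_im _
      have hpos : 0 < Real.sin (2 * Real.pi / 5) := by
        apply Real.sin_pos_of_pos_of_lt_pi
        · have := Real.pi_pos; positivity
        · nlinarith [Real.pi_pos]
      rw [h] at him
      simp at him
      rw [← him] at hpos
      exact lt_irrefl _ hpos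
    have hc : ((((Real.sqrt 5 - 1) / 2 : ℝ) : ℂ) - 1) ≠ 0 := by
      intro h
      rw [sub_eq_zero, show (1:ℂ) = ((1:ℝ):ℂ) by norm_num, Complex.ofReal_inj] at h
      nlinarith [sqrt5_lt]
    have ha : ‖1 - ζ 5‖ ≤ 2 := by
      calc ‖1 - ζ 5‖ ≤ ‖(1:ℂ)‖ + ‖ζ 5‖ := by
            simpa using norm_sub_le (1 : ℂ) (ζ 5)
      _ = 2 := by rw [norm_one, ζ, Complex.norm_exp_ofReal_mul_I]; norm_num
    have hb : ‖(((Real.sqrt 5 - 1) / 2 : ℝ) : ℂ) - 1‖ = (3 - Real.sqrt 5) / 2 := by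
      have h : ((((Real.sqrt 5 - 1) / 2 : ℝ) : ℂ) - 1) = (((Real.sqrt 5 - 3) / 2 : ℝ) : ℂ) := by
        push_cast; ring
      rw [h, Complex.norm_real, Real.norm_eq_abs, abs_of_nonpos (by nlinarith [sqrt5_lt])]
      ring
    refine ⟨(1 - ζ 5 ^ 2) - (1 - ζ 5 ^ 4) - ((1 - ζ 5 ^ 1) + (1 - ζ 5 ^ 1)),
      sub_mem (sub_mem (mem_all 5 hn0 2) (mem_all 5 hn0 4))
        (add_mem (mem_all 5 hn0 1) (mem_all 5 hn0 1)), ?_, ?_⟩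
    · rw [hfac]
      exact mul_ne_zero (sub_ne_zero.mpr (fun h => hone h.symm)) hc
    · rw [hfac, norm_mul, hb]
      have h1 : (0:ℝ) ≤ (3 - Real.sqrt 5) / 2 := by nlinarith [sqrt5_lt]
      have h2 := mul_le_mul_of_nonneg_right ha h1
      nlinarith [lt_sqrt5]
  · have hn7 : 7 ≤ n := by omega
    have hval : (1 - ζ n ^ 1) + (1 - ζ n ^ (n - 1))
        = (((2 - 2 * Real.cos (2 * Real.pi / n) : ℝ)) : ℂ) := by
      have h := zeta_add_inv n hn0
      have h2 : (((2 - 2 * Real.cos (2 * Real.pi / n) : ℝ)) : ℂ)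
          = 2 - (((2 * Real.cos (2 * Real.pi / n) : ℝ)) : ℂ) := by push_cast; ring
      rw [h2, ← h]; ring
    have hcos1 : Real.cos (2 * Real.pi / n) < 1 := by
      calc Real.cos (2 * Real.pi / n) < Real.cos 0 := by
            apply Real.cos_lt_cos_of_nonneg_of_le_pi le_rfl
            · have h7 : (7:ℝ) ≤ n := by exact_mod_cast hn7
              rw [div_le_iff₀ (by linarith)]
              nlinarith [Real.pi_pos]
            · have := Real.pi_pos
              have h7 : (7:ℝ) ≤ n := by exact_mod_cast hn7
              positivity
      _ = 1 := Real.cos_zero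
    have hcos2 : 1 / 2 < Real.cos (2 * Real.pi / n) := by
      have h3 : Real.cos (Real.pi / 3) = 1 / 2 := Real.cos_pi_div_three
      rw [← h3]
      have h7 : (7:ℝ) ≤ n := by exact_mod_cast hn7
      apply Real.cos_lt_cos_of_nonneg_of_le_pi
      · have := Real.pi_pos; positivity
      · nlinarith [Real.pi_pos]
      · rw [div_lt_div_iff₀ (by linarith [Real.pi_pos]) (by norm_num)]
        nlinarith [Real.pi_pos]
    refine ⟨(1 - ζ n ^ 1) + (1 - ζ n ^ (n - 1)),
      add_mem (mem_all n hn0 1) (mem_all n hn0 _), ?_, ?_⟩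
    · rw [hval, Complex.ofReal_ne_zero]
      linarith
    · rw [hval, Complex.norm_real, Real.norm_eq_abs, abs_of_pos (by linarith)]
      linarith

end Stmt5Aux

/-- For `n ≥ 5`, `n ≠ 6`, the subgroup of `(ℂ, +)` generated by the `n` vectors `1 - ζ^k`
(`k = 0,…,n-1`), `ζ = e^{2πi/n}`, is not discrete: it contains nonzero elements of arbitrarily
small absolute value. -/
theorem stmt5 (n : ℕ) (hn : 5 ≤ n) (hn6 : n ≠ 6) :
    ∀ ε : ℝ, 0 < ε →
      ∃ v ∈ AddSubgroup.closure
          {w : ℂ | ∃ k : ℕ, k < n ∧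
            w = 1 - Complex.exp ((2 * Real.pi / n : ℝ) * Complex.I) ^ k},
        v ≠ 0 ∧ ‖v‖ < ε := by
  intro ε hε
  have hn0 : n ≠ 0 := by omega
  obtain ⟨u, hu, hu0, hu1⟩ := Stmt5Aux.exists_u n hn hn6
  obtain ⟨m, hm⟩ := exists_pow_lt_of_lt_one hε hu1
  refine ⟨u ^ (m + 1), Stmt5Aux.pow_mem' n hn0 hu m, pow_ne_zero _ hu0, ?_⟩
  rw [norm_pow]
  calc ‖u‖ ^ (m + 1) ≤ ‖u‖ ^ m := by
        apply pow_le_pow_of_le_one (norm_nonneg u) (le_of_lt hu1)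
        omega
  _ < ε := hm
end

section
/- For n ∈ {1, 2, 3, 4, 6}, the subgroup of (ℂ, +) generated by the vectors 1 - ζ^k (k = 0,…,n-1), with ζ = e^{2πi/n}, is a discrete subgroup of ℂ. -/
open Complex Real

lemma key_lat (z : ℂ) (e : ℤ) (hre : 2 * z.re = (e : ℝ)) (he : -1 ≤ e ∧ e ≤ 1)
    (hz : Complex.normSq z = 1) (a b : ℤ) (hlt : ‖(a : ℂ) + (b : ℂ) * z‖ < 1) :
    (a : ℂ) + (b : ℂ) * z = 0 := by
  set v : ℂ := (a : ℂ) + (b : ℂ) * z with hv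
  have h1 : z.re ^ 2 + z.im ^ 2 = 1 := by
    have := hz; simp [Complex.normSq_apply] at this; nlinarith [this]
  have hnsq : Complex.normSq v = (a : ℝ)^2 + (a : ℝ) * b * e + (b : ℝ)^2 := by
    simp only [hv, Complex.normSq_apply, Complex.add_re, Complex.add_im, Complex.mul_re,
      Complex.mul_im, Complex.intCast_re, Complex.intCast_im]
    ring_nf
    linear_combination ((a:ℝ) * b) * hre + (b:ℝ)^2 * h1
  have hlt2 : Complex.normSq v < 1 := by
    have := Complex.sq_norm v
    nlinarith [norm_nonneg v, hlt]
  have hge : (0:ℝ) ≤ Complex.normSq v := Complex.normSq_nonneg v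
  rw [hnsq] at hlt2 hge
  have hl : (a^2 + a * b * e + b^2 : ℤ) < 1 := by exact_mod_cast (by push_cast; linarith : ((a^2 + a*b*e + b^2 : ℤ) : ℝ) < 1)
  have hg : (0:ℤ) ≤ a^2 + a * b * e + b^2 := by exact_mod_cast (by push_cast; linarith : (0:ℝ) ≤ ((a^2 + a*b*e + b^2 : ℤ) : ℝ))
  have hint : a^2 + a * b * e + b^2 = 0 := le_antisymm (by linarith) hg
  have hee : (0:ℤ) ≤ (1+e)*(1-e) := mul_nonneg (by linarith [he.1]) (by linarith [he.2])
  have hb2 : b^2 ≤ 0 := by nlinarith [sq_nonneg (2*a + e*b), sq_nonneg b, hint, hee]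
  have hb : b = 0 := by
    have : b^2 = 0 := le_antisymm hb2 (sq_nonneg b)
    exact pow_eq_zero_iff two_ne_zero |>.mp this
  have ha : a = 0 := by
    have : a^2 = 0 := by rw [hb] at hint; linarith [hint]
    exact pow_eq_zero_iff two_ne_zero |>.mp this
  rw [hv, ha, hb]; simp

lemma main_aux (S : Set ℂ) (z : ℂ) (e : ℤ) (hre : 2 * z.re = (e : ℝ))
    (he : -1 ≤ e ∧ e ≤ 1) (hz : Complex.normSq z = 1)
    (hS : S ⊆ (AddSubgroup.closure {1, z} : AddSubgroup ℂ)) :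
    ∀ v ∈ AddSubgroup.closure S, ‖v‖ < 1 → v = 0 := by
  intro v hv hlt
  have hv' : v ∈ AddSubgroup.closure {1, z} :=
    (AddSubgroup.closure_le _).mpr hS hv
  rw [AddSubgroup.mem_closure_pair] at hv'
  obtain ⟨a, b, hab⟩ := hv'
  have hveq : v = (a : ℂ) + (b : ℂ) * z := by
    rw [← hab]; push_cast [zsmul_eq_mul]; ring
  rw [hveq]
  exact key_lat z e hre he hz a b (hveq ▸ hlt)

lemma mem_lat (z w : ℂ) (a b : ℤ) (h : (a : ℂ) + (b : ℂ) * z = w) :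
    w ∈ (AddSubgroup.closure {1, z} : AddSubgroup ℂ) := by
  rw [AddSubgroup.mem_closure_pair]
  exact ⟨a, b, by rw [← h]; push_cast [zsmul_eq_mul]; ring⟩

lemma exp_form (θ : ℝ) :
    Complex.exp ((θ : ℂ) * Complex.I) = (Real.cos θ : ℂ) + (Real.sin θ : ℂ) * Complex.I := by
  rw [Complex.exp_mul_I]
  simp [Complex.ofReal_cos, Complex.ofReal_sin]

/-- For `n ∈ {1, 2, 3, 4, 6}`, the subgroup of `(ℂ, +)` generated by the vectors `1 - ζ^k`
(`k = 0,…,n-1`), `ζ = e^{2πi/n}`, is discrete: `0` is isolated in it. -/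
theorem stmt6 (n : ℕ) (hn : n ∈ ({1, 2, 3, 4, 6} : Set ℕ)) :
    ∃ ε : ℝ, 0 < ε ∧
      ∀ v ∈ AddSubgroup.closure
          {w : ℂ | ∃ k : ℕ, k < n ∧
            w = 1 - Complex.exp ((2 * Real.pi / n : ℝ) * Complex.I) ^ k},
        ‖v‖ < ε → v = 0 := by
  refine ⟨1, one_pos, ?_⟩
  have hs3 : ((Real.sqrt 3 : ℝ) : ℂ)^2 = 3 := by
    norm_cast
    rw [sq]
    exact_mod_cast Real.mul_self_sqrt (by norm_num)
  simp only [Set.mem_insert_iff, Set.mem_singleton_iff] at hn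
  rcases hn with rfl | rfl | rfl | rfl | rfl
  · -- n = 1
    have hζ : Complex.exp (((2 * Real.pi / (1:ℕ) : ℝ) : ℂ) * Complex.I) = 1 := by
      rw [show (((2 * Real.pi / (1:ℕ) : ℝ)) : ℂ) * Complex.I = 2 * (Real.pi : ℂ) * Complex.I by
        push_cast; ring]
      exact Complex.exp_two_pi_mul_I
    refine main_aux _ Complex.I 0 (by simp) (by norm_num) (by simp) ?_
    rintro w ⟨k, hk, rfl⟩
    interval_cases k
    · exact mem_lat _ _ 0 0 (by rw [hζ]; push_cast; ring)
  · -- n = 2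
    have hζ : Complex.exp (((2 * Real.pi / (2:ℕ) : ℝ) : ℂ) * Complex.I) = -1 := by
      rw [show (((2 * Real.pi / (2:ℕ) : ℝ)) : ℂ) * Complex.I = (Real.pi : ℂ) * Complex.I by
        push_cast; ring]
      exact Complex.exp_pi_mul_I
    refine main_aux _ Complex.I 0 (by simp) (by norm_num) (by simp) ?_
    rintro w ⟨k, hk, rfl⟩
    interval_cases k
    · exact mem_lat _ _ 0 0 (by rw [hζ]; push_cast; ring)
    · exact mem_lat _ _ 2 0 (by rw [hζ]; push_cast; ring)
  · -- n = 3
    set ζ := Complex.exp (((2 * Real.pi / (3:ℕ) : ℝ) : ℂ) * Complex.I) with hζdef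
    have hζ : ζ = ((-1/2 : ℝ) : ℂ) + ((Real.sqrt 3 / 2 : ℝ) : ℂ) * Complex.I := by
      rw [hζdef, show ((2 * Real.pi / (3:ℕ) : ℝ) : ℂ) = ((2 * Real.pi / 3 : ℝ) : ℂ) by norm_num,
        exp_form]
      have hθ : (2 * Real.pi / 3 : ℝ) = Real.pi - Real.pi / 3 := by ring
      rw [hθ, Real.cos_pi_sub, Real.sin_pi_sub, Real.cos_pi_div_three, Real.sin_pi_div_three]
      norm_num
    have hζ2 : ζ^2 = -1 - ζ := by
      rw [hζ]; push_cast
      linear_combination (Complex.I^2/4) * hs3 + ((3:ℂ)/4) * Complex.I_sq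
    refine main_aux _ ζ (-1) ?_ (by norm_num) ?_ ?_
    · rw [hζ]; first
      | (simp; norm_num)
      | simp
      | norm_num
    · rw [hζ]
      simp [Complex.normSq_apply]
      nlinarith [Real.sq_sqrt (by norm_num : (3:ℝ) ≥ 0)]
    · rintro w ⟨k, hk, rfl⟩
      interval_cases k
      · exact mem_lat _ _ 0 0 (by push_cast; ring)
      · exact mem_lat _ _ 1 (-1) (by push_cast; ring)
      · exact mem_lat _ _ 2 1 (by push_cast; linear_combination hζ2)
  · -- n = 4
    have hζ : Complex.exp (((2 * Real.pi / (4:ℕ) : ℝ) : ℂ) * Complex.I) = Complex.I := by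
      rw [show ((2 * Real.pi / (4:ℕ) : ℝ) : ℂ) = ((Real.pi / 2 : ℝ) : ℂ) by push_cast; ring,
        exp_form, Real.cos_pi_div_two, Real.sin_pi_div_two]
      norm_num
    refine main_aux _ Complex.I 0 (by simp) (by norm_num) (by simp) ?_
    rintro w ⟨k, hk, rfl⟩
    rw [hζ]
    interval_cases k
    · exact mem_lat _ _ 0 0 (by push_cast; ring)
    · exact mem_lat _ _ 1 (-1) (by push_cast; ring)
    · exact mem_lat _ _ 2 0 (by push_cast; linear_combination Complex.I_sq)
    · exact mem_lat _ _ 1 1 (by push_cast; linear_combination Complex.I * Complex.I_sq)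
  · -- n = 6
    set ζ := Complex.exp (((2 * Real.pi / (6:ℕ) : ℝ) : ℂ) * Complex.I) with hζdef
    have hζ : ζ = ((1/2 : ℝ) : ℂ) + ((Real.sqrt 3 / 2 : ℝ) : ℂ) * Complex.I := by
      rw [hζdef, show ((2 * Real.pi / (6:ℕ) : ℝ) : ℂ) = ((Real.pi / 3 : ℝ) : ℂ) by push_cast; ring,
        exp_form, Real.cos_pi_div_three, Real.sin_pi_div_three]
      try norm_num
    have hζ2 : ζ^2 = ζ - 1 := by
      rw [hζ]; push_cast
      linear_combination (Complex.I^2/4) * hs3 + ((3:ℂ)/4) * Complex.I_sq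
    refine main_aux _ ζ 1 ?_ (by norm_num) ?_ ?_
    · rw [hζ]; first
      | (simp; norm_num)
      | simp
      | norm_num
    · rw [hζ]
      simp [Complex.normSq_apply]
      nlinarith [Real.sq_sqrt (by norm_num : (3:ℝ) ≥ 0)]
    · rintro w ⟨k, hk, rfl⟩
      interval_cases k
      · exact mem_lat _ _ 0 0 (by push_cast; ring)
      · exact mem_lat _ _ 1 (-1) (by push_cast; ring)
      · exact mem_lat _ _ 2 (-1) (by push_cast; linear_combination hζ2)
      · exact mem_lat _ _ 2 0 (by push_cast; linear_combination (ζ+1) * hζ2)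
      · exact mem_lat _ _ 1 1 (by push_cast; linear_combination (ζ^2+ζ) * hζ2)
      · exact mem_lat _ _ 0 1 (by push_cast; linear_combination (ζ^3+ζ^2-1) * hζ2)
end

section
/- The real number r = √(5(2 - √2)) satisfies r⁴ - 20r² + 50 = 0, and the polynomial x⁴ - 20x² + 50 is irreducible over ℚ. -/
open Polynomial

lemma aux_irred_int : Irreducible (X ^ 4 - 20 * X ^ 2 + 50 : ℤ[X]) := by
  have hprim : (X ^ 4 - 20 * X ^ 2 + 50 : ℤ[X]).IsPrimitive := by
    have hm : (X ^ 4 - 20 * X ^ 2 + 50 : ℤ[X]).Monic := by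
      monicity!
    exact hm.isPrimitive
  have hdeg : (X ^ 4 - 20 * X ^ 2 + 50 : ℤ[X]).natDegree = 4 := by compute_degree!
  apply irreducible_of_eisenstein_criterion (P := Ideal.span {(2 : ℤ)})
    (Ideal.span_singleton_prime (by norm_num) |>.2 (by norm_num))
  · rw [Polynomial.Monic.leadingCoeff (show (X ^ 4 - 20 * X ^ 2 + 50 : ℤ[X]).Monic by monicity!)]
    simp [Ideal.mem_span_singleton]
  · intro n hn
    rw [degree_eq_natDegree (by intro h; simp [h] at hdeg), hdeg] at hn
    have hn' : n < 4 := by exact_mod_cast hn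
    interval_cases n <;> simp [Ideal.mem_span_singleton, coeff_X_pow] <;> decide
  · rw [degree_eq_natDegree (by intro h; simp [h] at hdeg), hdeg]; norm_num
  · simp [Ideal.span_singleton_pow, Ideal.mem_span_singleton]
  · exact hprim

/-- `r = √(5(2 - √2))` satisfies `r⁴ - 20r² + 50 = 0`, and `x⁴ - 20x² + 50` is irreducible
over `ℚ`. -/
theorem stmt9 :
    (Real.sqrt (5 * (2 - Real.sqrt 2))) ^ 4 - 20 * (Real.sqrt (5 * (2 - Real.sqrt 2))) ^ 2
      + 50 = 0 ∧
    Irreducible (X ^ 4 - 20 * X ^ 2 + 50 : ℚ[X]) := by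
  constructor
  · have h2 : Real.sqrt 2 ≤ 2 := by
      nlinarith [Real.sq_sqrt (by norm_num : (2:ℝ) ≥ 0), Real.sqrt_nonneg 2]
    have hr : Real.sqrt (5 * (2 - Real.sqrt 2)) ^ 2 = 5 * (2 - Real.sqrt 2) :=
      Real.sq_sqrt (by nlinarith)
    have h2' : Real.sqrt 2 ^ 2 = 2 := Real.sq_sqrt (by norm_num)
    nlinarith [hr, h2']
  · have hprim : (X ^ 4 - 20 * X ^ 2 + 50 : ℤ[X]).IsPrimitive := by
      have hm : (X ^ 4 - 20 * X ^ 2 + 50 : ℤ[X]).Monic := by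
        monicity!
      exact hm.isPrimitive
    have := (Polynomial.IsPrimitive.Int.irreducible_iff_irreducible_map_cast hprim).mp aux_irred_int
    simpa using this
end

section
/- With ζ = e^{2πi/5} and E = ζ - ζ², we have |E + 1| = √(3 + φ), where φ is the golden ratio. -/
open Complex Real

/-- With `ζ = e^{2πi/5}` and `E = ζ - ζ²`, we have `|E + 1| = √(3 + φ)`. -/
theorem stmt12 :
    ‖((Complex.exp ((2 * Real.pi / 5 : ℝ) * Complex.I)
        - Complex.exp ((2 * Real.pi / 5 : ℝ) * Complex.I) ^ 2) + 1)‖ =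
      Real.sqrt (3 + goldenRatio) := by
  have hc : Real.cos (2 * Real.pi / 5) = (Real.sqrt 5 - 1) / 4 := by
    have h2 : 2 * Real.pi / 5 = 2 * (Real.pi / 5) := by ring
    have h5 : Real.sqrt 5 ^ 2 = 5 := Real.sq_sqrt (by norm_num)
    rw [h2, Real.cos_two_mul, Real.cos_pi_div_five]
    nlinarith [h5]
  set θ : ℝ := 2 * Real.pi / 5 with hθ
  have hsq : ‖((Complex.exp ((θ : ℝ) * Complex.I)
      - Complex.exp ((θ : ℝ) * Complex.I) ^ 2) + 1)‖ ^ 2 = 3 + goldenRatio := by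
    rw [Complex.sq_norm, Complex.exp_mul_I]
    simp only [Complex.normSq_apply]
    simp [Complex.add_re, Complex.add_im, Complex.mul_re, Complex.mul_im,
      Complex.cos_ofReal_re, Complex.sin_ofReal_re, Complex.cos_ofReal_im,
      Complex.sin_ofReal_im, pow_two, goldenRatio]
    have hss : Real.sin θ ^ 2 + Real.cos θ ^ 2 = 1 := Real.sin_sq_add_cos_sq θ
    have h5 : Real.sqrt 5 ^ 2 = 5 := Real.sq_sqrt (by norm_num)
    set c := Real.cos θ
    set s := Real.sin θ
    linear_combination (s ^ 2 + 1 - c ^ 2 + 2 * (c - c ^ 2 + 1) + (1 - 2 * c) ^ 2) * hss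
      + (-4) * (c + (Real.sqrt 5 - 1) / 4) * hc + (-1 / 4) * h5
  have h := congrArg Real.sqrt hsq
  rwa [Real.sqrt_sq (norm_nonneg _)] at h
end

section
/- Consider rotations by π about the three points 0, 1, and √2 in ℂ. The group of isometries they generate contains the translations by 2 and by 2√2, whose ratio is irrational; hence this group is infinite. -/
/-- The group generated by the rotations by `π` about the points `0`, `1`, `√2` of `ℂ`
(`z ↦ -z`, `z ↦ 2 - z`, `z ↦ 2√2 - z`) contains the translations by `2` and by `2√2`, whose
ratio is irrational; hence the group is infinite. -/
theorem stmt15 (r₁ r₂ r₃ : Equiv.Perm ℂ)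
    (h₁ : ∀ z : ℂ, r₁ z = -z)
    (h₂ : ∀ z : ℂ, r₂ z = 2 - z)
    (h₃ : ∀ z : ℂ, r₃ z = 2 * Real.sqrt 2 - z) :
    (∃ t ∈ Subgroup.closure {r₁, r₂, r₃}, ∀ z : ℂ, t z = z + 2) ∧
    (∃ t ∈ Subgroup.closure {r₁, r₂, r₃}, ∀ z : ℂ, t z = z + 2 * Real.sqrt 2) ∧
    Irrational (2 * Real.sqrt 2 / 2) ∧
    Infinite (Subgroup.closure {r₁, r₂, r₃} : Subgroup (Equiv.Perm ℂ)) := by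
  have m₁ : r₁ ∈ Subgroup.closure {r₁, r₂, r₃} :=
    Subgroup.subset_closure (by simp)
  have m₂ : r₂ ∈ Subgroup.closure {r₁, r₂, r₃} :=
    Subgroup.subset_closure (by simp)
  have m₃ : r₃ ∈ Subgroup.closure {r₁, r₂, r₃} :=
    Subgroup.subset_closure (by simp)
  have ht2 : ∀ z : ℂ, (r₂ * r₁) z = z + 2 := by
    intro z
    simp [Equiv.Perm.mul_apply, h₁, h₂]; ring
  have ht3 : ∀ z : ℂ, (r₃ * r₁) z = z + 2 * Real.sqrt 2 := by
    intro z
    simp [Equiv.Perm.mul_apply, h₁, h₃]; ring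
  refine ⟨⟨r₂ * r₁, mul_mem m₂ m₁, ht2⟩, ⟨r₃ * r₁, mul_mem m₃ m₁, ht3⟩, ?_, ?_⟩
  · have : (2 * Real.sqrt 2 / 2 : ℝ) = Real.sqrt 2 := by ring
    rw [this]
    exact irrational_sqrt_two
  · -- injection from ℕ
    have key : ∀ n : ℕ, ∀ z : ℂ, ((r₂ * r₁) ^ n) z = z + 2 * n := by
      intro n
      induction n with
      | zero => simp
      | succ k ih =>
        intro z
        rw [pow_succ, Equiv.Perm.mul_apply, ht2 z, ih (z + 2)]
        push_cast; ring
    refine Infinite.of_injective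
      (fun n : ℕ => (⟨(r₂ * r₁) ^ n, pow_mem (mul_mem m₂ m₁) n⟩ :
        Subgroup.closure {r₁, r₂, r₃})) ?_
    intro m n hmn
    have := congrArg (fun p : (Subgroup.closure {r₁, r₂, r₃} : Subgroup (Equiv.Perm ℂ)) =>
      (p : Equiv.Perm ℂ) 0) hmn
    simp only [key] at this
    have h2 : (2 : ℂ) ≠ 0 := two_ne_zero
    field_simp at this
    exact_mod_cast (by simpa using this : (m : ℂ) = n)
end

section
/- Every orientation-preserving isometry of ℂ of the form z ↦ uz + v with |u| = 1, u ≠ 1, has a unique fixed point v/(1-u) and equals rotation about that point by arg(u). If such an isometry has u a primitive m-th root of unity with m ∉ {1,2,3,4,6}, and a group G of bijections of ℂ contains it together with another such rotation about a different center, then G contains arbitrarily small nonzero translations. -/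
open Complex

set_option linter.unnecessarySimpa false in

lemma aux_part1 (u v : ℂ) (hu : ‖u‖ = 1) (hne : u ≠ 1) :
    (∀ z : ℂ, u * z + v = z ↔ z = v / (1 - u)) ∧
    Complex.exp ((Complex.arg u : ℝ) * Complex.I) = u ∧
    (∀ z : ℂ, u * z + v = v / (1 - u) + u * (z - v / (1 - u))) := by
  have h1 : (1 : ℂ) - u ≠ 0 := sub_ne_zero.mpr (Ne.symm hne)
  refine ⟨fun z => ?_, ?_, fun z => ?_⟩
  · rw [eq_div_iff h1]
    exact ⟨fun h => by linear_combination -h, fun h => by linear_combination -h⟩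
  · have h := Complex.norm_mul_exp_arg_mul_I u
    rwa [hu, Complex.ofReal_one, one_mul] at h
  · field_simp
    ring

set_option linter.unnecessarySimpa false in

lemma aux_part2 (m : ℕ) (u v₁ v₂ : ℂ) (hprim : IsPrimitiveRoot u m)
    (hm : m ∉ ({1, 2, 3, 4, 6} : Set ℕ)) (hu1 : u ≠ 1)
    (hcent : v₁ / (1 - u) ≠ v₂ / (1 - u))
    (f g : Equiv.Perm ℂ) (hf : ∀ z : ℂ, f z = u * z + v₁) (hg : ∀ z : ℂ, g z = u * z + v₂)
    (G : Subgroup (Equiv.Perm ℂ)) (hfG : f ∈ G) (hgG : g ∈ G)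
    (ε : ℝ) (hε : 0 < ε) :
    ∃ t ∈ G, ∃ w : ℂ, w ≠ 0 ∧ ‖w‖ < ε ∧ ∀ z : ℂ, t z = z + w := by
  have hu0 : u ≠ 0 := by
    intro h
    have h01 := f.injective (a₁ := 0) (a₂ := 1) (by rw [hf, hf, h]; ring)
    simpa using h01
  have hv : v₁ ≠ v₂ := fun h => hcent (by rw [h])
  set P : ℂ → Prop := fun w => ∃ t ∈ G, ∀ z : ℂ, t z = z + w with hP
  -- closure properties
  have hadd : ∀ w w', P w → P w' → P (w + w') := by
    rintro w w' ⟨t, htG, ht⟩ ⟨s, hsG, hs⟩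
    exact ⟨t * s, mul_mem htG hsG, fun z => by rw [Equiv.Perm.mul_apply, hs, ht]; ring⟩
  have hneg : ∀ w, P w → P (-w) := by
    rintro w ⟨t, htG, ht⟩
    refine ⟨t⁻¹, inv_mem htG, fun z => ?_⟩
    rw [Equiv.Perm.inv_def, Equiv.symm_apply_eq, ht]; ring
  have hmulu : ∀ w, P w → P (u * w) := by
    rintro w ⟨t, htG, ht⟩
    refine ⟨f * t * f⁻¹, mul_mem (mul_mem hfG htG) (inv_mem hfG), fun z => ?_⟩
    have h1 : f (f⁻¹ z) = z := by rw [Equiv.Perm.inv_def]; exact f.apply_symm_apply z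
    have h2 : u * (f⁻¹ z) + v₁ = z := by rw [← hf]; exact h1
    rw [Equiv.Perm.mul_apply, Equiv.Perm.mul_apply, ht, hf]
    linear_combination h2
  have hinvu : ∀ w, P w → P (u⁻¹ * w) := by
    rintro w ⟨t, htG, ht⟩
    refine ⟨f⁻¹ * t * f, mul_mem (mul_mem (inv_mem hfG) htG) hfG, fun z => ?_⟩
    rw [Equiv.Perm.mul_apply, Equiv.Perm.mul_apply, ht, Equiv.Perm.inv_def,
      Equiv.symm_apply_eq, hf, hf]
    field_simp
    ring
  have hpow : ∀ (k : ℕ) (w), P w → P (u ^ k * w) := by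
    intro k w h
    induction k with
    | zero => simpa using h
    | succ n ih =>
      have h2 := hmulu _ ih
      have e : u * (u ^ n * w) = u ^ (n + 1) * w := by ring
      rwa [e] at h2
  have hpowinv : ∀ (k : ℕ) (w), P w → P ((u⁻¹) ^ k * w) := by
    intro k w h
    induction k with
    | zero => simpa using h
    | succ n ih =>
      have h2 := hinvu _ ih
      have e : u⁻¹ * ((u⁻¹) ^ n * w) = (u⁻¹) ^ (n + 1) * w := by ring
      rwa [e] at h2
  set w₀ : ℂ := (v₁ - v₂) / u with hw₀
  have hw0 : w₀ ≠ 0 := div_ne_zero (sub_ne_zero.mpr hv) hu0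
  have habsw₀ : 0 < ‖w₀‖ := norm_pos_iff.mpr hw0
  have h0 : P w₀ := by
    refine ⟨g⁻¹ * f, mul_mem (inv_mem hgG) hfG, fun z => ?_⟩
    rw [Equiv.Perm.mul_apply, Equiv.Perm.inv_def, Equiv.symm_apply_eq, hf, hg, hw₀]
    field_simp
    ring
  have hm' : m = 0 ∨ (5 ≤ m ∧ m ≠ 6) := by
    simp only [Set.mem_insert_iff, Set.mem_singleton_iff] at hm
    omega
  rcases hm' with hm0 | ⟨h5, h6⟩
  · -- m = 0 : u has infinite order
    subst hm0
    have horder : ∀ k : ℕ, k ≠ 0 → u ^ k ≠ 1 := fun k hk h =>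
      hk (by simpa using (hprim.pow_eq_one_iff_dvd k).mp h)
    rcases lt_trichotomy (‖u‖) 1 with hlt | heq | hgt
    · obtain ⟨n, hn⟩ := exists_pow_lt_of_lt_one (div_pos hε habsw₀) hlt
      obtain ⟨t, htG, ht⟩ := hpow n w₀ h0
      refine ⟨t, htG, u ^ n * w₀, mul_ne_zero (pow_ne_zero n hu0) hw0, ?_, ht⟩
      rw [norm_mul, norm_pow]
      rw [lt_div_iff₀ habsw₀] at hn
      exact hn
    · -- |u| = 1 : pigeonhole on the compact circle
      have hsub : ∀ n : ℕ, u ^ n ∈ Metric.sphere (0 : ℂ) 1 := by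
        intro n
        simp [Complex.dist_eq, map_pow, heq]
      obtain ⟨x, -, φ, hφ, hconv⟩ := (isCompact_sphere (0 : ℂ) 1).tendsto_subseq hsub
      have hcauchy := hconv.cauchySeq
      rw [Metric.cauchySeq_iff'] at hcauchy
      obtain ⟨N, hN⟩ := hcauchy (ε / ‖w₀‖) (div_pos hε habsw₀)
      have hd := hN (N + 1) (by omega)
      set d : ℕ := φ (N + 1) - φ N with hdd
      have hφlt : φ N < φ (N + 1) := hφ (by omega)
      have hdpos : d ≠ 0 := by omega
      have key : ‖u ^ d - 1‖ < ε / ‖w₀‖ := by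
        have hsplit : u ^ φ (N + 1) = u ^ d * u ^ φ N := by
          rw [← pow_add]; congr 1; omega
        have habsN : ‖u ^ φ N‖ = 1 := by rw [norm_pow, heq, one_pow]
        have : dist ((fun n => u ^ n) (φ (N + 1))) ((fun n => u ^ n) (φ N))
            = ‖u ^ d - 1‖ := by
          simp only [Function.comp_apply, Complex.dist_eq]
          rw [hsplit, show u ^ d * u ^ φ N - u ^ φ N = (u ^ d - 1) * u ^ φ N by ring,
            norm_mul, habsN, mul_one]
        rw [← this]
        exact hd
      obtain ⟨t, htG, ht⟩ := hadd _ _ (hpow d w₀ h0) (hneg _ h0)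
      refine ⟨t, htG, u ^ d * w₀ + -w₀, ?_, ?_, ht⟩
      · rw [show u ^ d * w₀ + -w₀ = (u ^ d - 1) * w₀ by ring]
        exact mul_ne_zero (sub_ne_zero.mpr (horder d hdpos)) hw0
      · rw [show u ^ d * w₀ + -w₀ = (u ^ d - 1) * w₀ by ring, norm_mul]
        rw [lt_div_iff₀ habsw₀] at key
        exact key
    · -- |u| > 1
      have hinvlt : ‖u⁻¹‖ < 1 := by
        rw [norm_inv]
        exact inv_lt_one_of_one_lt₀ hgt
      obtain ⟨n, hn⟩ := exists_pow_lt_of_lt_one (div_pos hε habsw₀) hinvlt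
      obtain ⟨t, htG, ht⟩ := hpowinv n w₀ h0
      refine ⟨t, htG, (u⁻¹) ^ n * w₀,
        mul_ne_zero (pow_ne_zero n (inv_ne_zero hu0)) hw0, ?_, ht⟩
      rw [norm_mul, norm_pow]
      rw [lt_div_iff₀ habsw₀] at hn
      exact hn
  · -- 5 ≤ m, m ≠ 6 : use ζ = 2cos(2π/m) - 1 ∈ (-1,1) \ {0}
    have hm0 : m ≠ 0 := by omega
    have hmR : (5 : ℝ) ≤ m := by exact_mod_cast h5
    have hπ := Real.pi_pos
    obtain ⟨θ, hθ⟩ : ∃ θ : ℝ, θ = 2 * Real.pi / m := ⟨_, rfl⟩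
    have hθpos : 0 < θ := by
      rw [hθ]
      exact div_pos (by positivity) (by exact_mod_cast Nat.pos_of_ne_zero hm0)
    have hθlt : θ < Real.pi / 2 := by
      rw [hθ, div_lt_div_iff₀ (by linarith) (by norm_num)]
      nlinarith
    set e : ℂ := Complex.exp (2 * Real.pi * Complex.I / m) with he
    have heprim : IsPrimitiveRoot e m := Complex.isPrimitiveRoot_exp m hm0
    haveI : NeZero m := ⟨hm0⟩
    obtain ⟨a, ha, hae⟩ := hprim.eq_pow_of_pow_eq_one heprim.pow_eq_one
    have heθ : e = Complex.exp ((θ : ℂ) * Complex.I) := by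
      rw [he]; congr 1; push_cast [hθ]; ring
    have hsum : e + e⁻¹ = ((2 * Real.cos θ : ℝ) : ℂ) := by
      rw [heθ, ← Complex.exp_neg, show -((θ : ℂ) * Complex.I) = ((-θ : ℝ) : ℂ) * Complex.I
        by push_cast; ring, Complex.exp_mul_I, Complex.exp_mul_I]
      simp only [← Complex.ofReal_cos, ← Complex.ofReal_sin, Real.cos_neg, Real.sin_neg]
      push_cast
      ring
    obtain ⟨c, hc⟩ : ∃ c : ℝ, c = Real.cos θ := ⟨_, rfl⟩
    have hc0 : 0 < c := hc ▸ Real.cos_pos_of_mem_Ioo ⟨by linarith, hθlt⟩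
    have hc1 : c < 1 := by
      have h := Real.strictAntiOn_cos (Set.mem_Icc.mpr ⟨le_rfl, hπ.le⟩)
        (Set.mem_Icc.mpr ⟨hθpos.le, by linarith⟩) hθpos
      rw [hc]; simpa using h
    have hc6 : c ≠ 1 / 2 := by
      intro h
      have hinj : θ = Real.pi / 3 :=
        Real.injOn_cos (Set.mem_Icc.mpr ⟨hθpos.le, by linarith⟩)
          (Set.mem_Icc.mpr ⟨by positivity, by linarith⟩)
          (by rw [← hc, h, Real.cos_pi_div_three])
      have hmne : (m : ℝ) ≠ 0 := by positivity
      rw [hθ] at hinj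
      have hm6 : (m : ℝ) = 6 := by
        field_simp at hinj
        have h2 : Real.pi * (m : ℝ) = Real.pi * 6 := by rw [← hinj]; ring
        exact mul_left_cancel₀ hπ.ne' h2
      exact h6 (by exact_mod_cast hm6)
    set ζ : ℂ := ((2 * c - 1 : ℝ) : ℂ) with hζ
    have hζeq : ζ = e + e⁻¹ - 1 := by rw [hζ, hc, hsum]; push_cast; ring
    have hζP : ∀ w, P w → P (ζ * w) := by
      intro w hw
      have h1 : P (e * w) := by
        have := hpow a w hw
        rwa [hae] at this
      have h2 : P (e⁻¹ * w) := by
        have := hpowinv a w hw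
        rwa [inv_pow, hae] at this
      have h3 := hadd _ _ h1 (hadd _ _ h2 (hneg w hw))
      rwa [show e * w + (e⁻¹ * w + -w) = ζ * w by rw [hζeq]; ring] at h3
    have hζn : ∀ n : ℕ, P (ζ ^ n * w₀) := by
      intro n
      induction n with
      | zero => simpa using h0
      | succ k ih =>
        have h2 := hζP _ ih
        rwa [show ζ * (ζ ^ k * w₀) = ζ ^ (k + 1) * w₀ by ring] at h2
    have hζ0 : ζ ≠ 0 := by
      rw [hζ, Complex.ofReal_ne_zero]
      intro h; apply hc6; linarith
    have habsζ : ‖ζ‖ < 1 := by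
      rw [hζ, Complex.norm_real, Real.norm_eq_abs, abs_lt]
      constructor <;> linarith
    obtain ⟨n, hn⟩ := exists_pow_lt_of_lt_one (div_pos hε habsw₀) habsζ
    obtain ⟨t, htG, ht⟩ := hζn n
    refine ⟨t, htG, ζ ^ n * w₀, mul_ne_zero (pow_ne_zero n hζ0) hw0, ?_, ht⟩
    rw [norm_mul, norm_pow]
    rw [lt_div_iff₀ habsw₀] at hn
    exact hn

/-- (1) Every orientation-preserving isometry `z ↦ uz + v` of `ℂ` with `|u| = 1`, `u ≠ 1`, has
the unique fixed point `p = v / (1 - u)` and equals rotation about `p` by `arg u`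
(i.e. `uz + v = p + u(z - p)`, with `u = e^{i·arg u}`).
(2) If `u` is a primitive `m`-th root of unity with `m ∉ {1,2,3,4,6}` and a group `G` of
bijections of `ℂ` contains the rotation `z ↦ uz + v₁` together with another such rotation
`z ↦ uz + v₂` about a different center, then `G` contains arbitrarily small nonzero
translations. -/
theorem stmt18 :
    (∀ u v : ℂ, ‖u‖ = 1 → u ≠ 1 →
      (∀ z : ℂ, u * z + v = z ↔ z = v / (1 - u)) ∧
      Complex.exp ((Complex.arg u : ℝ) * Complex.I) = u ∧
      (∀ z : ℂ, u * z + v = v / (1 - u) + u * (z - v / (1 - u)))) ∧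
    (∀ (m : ℕ) (u v₁ v₂ : ℂ), IsPrimitiveRoot u m → m ∉ ({1, 2, 3, 4, 6} : Set ℕ) →
      u ≠ 1 → v₁ / (1 - u) ≠ v₂ / (1 - u) →
      ∀ (f g : Equiv.Perm ℂ), (∀ z : ℂ, f z = u * z + v₁) → (∀ z : ℂ, g z = u * z + v₂) →
      ∀ G : Subgroup (Equiv.Perm ℂ), f ∈ G → g ∈ G →
        ∀ ε : ℝ, 0 < ε → ∃ t ∈ G, ∃ w : ℂ, w ≠ 0 ∧ ‖w‖ < ε ∧
          ∀ z : ℂ, t z = z + w) := by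
  exact ⟨aux_part1, aux_part2⟩
end
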